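/- Let H be a d-ν-CA with default rule f, i.e., h_i = f for all |i| > k. If H is injective, then the CA F with local rule f is injective, and moreover H itself is surjective. -/

import Mathlib

/-!
Injectivity of `H` makes `F` pre-injective: two configurations that differ on a finite set can
be shifted so far that `H` only sees their difference where it acts as `F`, which commutes with
shifts. By the Garden of Eden theorem (Moore–Myhill) `F` is then surjective: an orphan pattern
of length `n` would leave at most `(|A|^n - 1)^m |A|^(2r)` images for the `|A|^(mn)` words of
length `mn`, which is too few for large `m`. Finally, fix the values `z` of `F x` outside
`[-k, k]`. On the configurations with these values, `H` is injective and `F` is surjective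
after restriction to `[-k, k]`, which are maps into the same finite set; hence both are
bijections. This gives injectivity of `F` and surjectivity of `H`.
-/

open Function

theorem Finite.surjective_and_injective_of_injective_of_surjective {α β : Type*} [Finite β]
    {g s : α → β} (hg : Injective g) (hs : Surjective s) : Surjective g ∧ Injective s := by
  have : Finite α := Finite.of_injective g hg
  have hcard : Nat.card α = Nat.card β :=
    (Nat.card_le_card_of_injective g hg).antisymm (Nat.card_le_card_of_surjective s hs)
  exact ⟨(hg.bijective_of_nat_card_le hcard.ge).2, (hs.bijective_of_nat_card_le hcard.le).1⟩

theorem injective_and_surjective_of_eq_off_finite {X ι B : Type*} [Finite B] {K : Set ι}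
    (hK : K.Finite) {H F : X → ι → B} (hHF : ∀ x, ∀ i ∉ K, H x i = F x i)
    (hH : Injective H) (hF : Surjective F) : Injective F ∧ Surjective H := by
  classical
  have : Finite K := hK.to_subtype
  let S (z : ι → B) := {x : X // ∀ i ∉ K, F x i = z i}
  have key (z : ι → B) : Surjective (fun x : S z => fun i : K => H x.1 i) ∧
      Injective (fun x : S z => fun i : K => F x.1 i) := by
    refine Finite.surjective_and_injective_of_injective_of_surjective
      (fun x y hxy => ?_) fun c => ?_
    · refine Subtype.ext (hH (funext fun i => ?_))
      by_cases hi : i ∈ K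
      · exact congrFun hxy ⟨i, hi⟩
      · rw [hHF _ i hi, hHF _ i hi, x.2 i hi, y.2 i hi]
    · obtain ⟨x, hx⟩ := hF fun i => if hi : i ∈ K then c ⟨i, hi⟩ else z i
      exact ⟨⟨x, fun i hi => by simp [hx, hi]⟩, funext fun i => by simp [hx]⟩
  refine ⟨fun x y hxy => ?_, fun z => ?_⟩
  · exact congrArg Subtype.val <| (key (F x)).2 (a₁ := ⟨x, fun _ _ => rfl⟩)
      (a₂ := ⟨y, fun i _ => congrFun hxy.symm i⟩) (funext fun i => congrFun hxy i)
  · obtain ⟨x, hx⟩ := (key z).1 fun i => z i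
    refine ⟨x.1, funext fun i => ?_⟩
    by_cases hi : i ∈ K
    · exact congrFun hx ⟨i, hi⟩
    · rw [hHF _ i hi, x.2 i hi]

theorem Nat.exists_mul_pow_lt_succ_pow (p b : ℕ) : ∃ m, b * p ^ m < (p + 1) ^ m := by
  have hp : (0 : ℝ) < p + 1 := by positivity
  obtain ⟨m, hm⟩ := exists_pow_lt_of_lt_one (show (0 : ℝ) < 1 / (b + 1) by positivity)
    (show (p : ℝ) / (p + 1) < 1 by rw [div_lt_one hp]; linarith)
  refine ⟨m, ?_⟩
  rw [div_pow, div_lt_div_iff₀ (by positivity) (by positivity)] at hm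
  exact_mod_cast (show (b : ℝ) * p ^ m < (p + 1) ^ m by
    nlinarith [pow_nonneg (Nat.cast_nonneg (α := ℝ) p) m])

theorem Int.eq_of_blocks {B : Type*} {y y' : ℤ → B} {p : ℤ} {m n c : ℕ}
    (hblock : ∀ (j : Fin m) (o : Fin n), y (p + n * j + o) = y' (p + n * j + o))
    (htail : ∀ t : Fin c, y (p + m * n + t) = y' (p + m * n + t))
    {i : ℤ} (hpi : p ≤ i) (hip : i < p + m * n + c) : y i = y' i := by
  obtain ⟨t, rfl⟩ : ∃ t : ℕ, i = p + t := ⟨(i - p).toNat, by omega⟩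
  by_cases ht : t < m * n
  · have hn : 0 < n := Nat.pos_of_ne_zero fun h => by simp [h] at ht
    have hdiv := Nat.div_add_mod t n
    have := hblock ⟨t / n, Nat.div_lt_of_lt_mul (by linarith)⟩ ⟨t % n, Nat.mod_lt t hn⟩
    simp only at this
    rwa [add_assoc, ← Nat.cast_mul, ← Nat.cast_add, hdiv] at this
  · have := htail ⟨t - m * n, by omega⟩
    simp only at this
    rwa [add_assoc, ← Nat.cast_mul, ← Nat.cast_add, Nat.add_sub_cancel' (not_lt.mp ht)] at this

def Preinjective {ι α Y : Type*} (F : (ι → α) → Y) : Prop :=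
  ∀ ⦃x y : ι → α⦄, {i | x i ≠ y i}.Finite → F x = F y → x = y

namespace CellularAutomaton

variable {A : Type*} {r : ℕ}

def window (r : ℕ) (x : ℤ → A) (i : ℤ) : Fin (2 * r + 1) → A :=
  fun j => x (i - r + (j : ℕ))

def globalMap (h : ℤ → (Fin (2 * r + 1) → A) → A) (x : ℤ → A) (i : ℤ) : A :=
  h i (window r x i)

theorem window_congr {x y : ℤ → A} {i : ℤ}
    (hxy : ∀ j, i - r ≤ j → j ≤ i + r → x j = y j) :
    window r x i = window r y i :=
  funext fun j => hxy _ (by omega) (by have := j.isLt; omega)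

theorem window_comp_add (x : ℤ → A) (d i : ℤ) :
    window r (x ∘ (· + d)) i = window r x (i + d) :=
  funext fun j => congrArg x (by ring)

theorem globalMap_const_comp_add (f : (Fin (2 * r + 1) → A) → A) (x : ℤ → A) (d i : ℤ) :
    globalMap (fun _ => f) (x ∘ (· + d)) i = globalMap (fun _ => f) x (i + d) :=
  congrArg f (window_comp_add x d i)

theorem continuous_globalMap [TopologicalSpace A] [DiscreteTopology A] [Finite A]
    (h : ℤ → (Fin (2 * r + 1) → A) → A) : Continuous (globalMap h) :=
  continuous_pi fun _ => continuous_of_discreteTopology.comp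
    (continuous_pi fun _ => continuous_apply _)

theorem preinjective_of_injective_of_eq_off {h : ℤ → (Fin (2 * r + 1) → A) → A}
    {f : (Fin (2 * r + 1) → A) → A} {k : ℕ} (hf : ∀ i : ℤ, (k : ℤ) < |i| → h i = f)
    (hinj : Injective (globalMap h)) : Preinjective (globalMap fun _ => f) := by
  intro x y hfin hxy
  obtain ⟨M, hM⟩ := hfin.bddAbove
  -- after shifting by `d` the configurations differ only left of every window meeting `[-k, k]`
  set d : ℤ := M + k + r + 1
  have hshift : x ∘ (· + d) = y ∘ (· + d) := hinj <| funext fun i => by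
    by_cases hi : |i| ≤ k
    · refine congrArg (h i) (window_congr fun j hj _ => ?_)
      by_contra hne
      have : j + d ≤ M := hM hne
      rw [abs_le] at hi
      omega
    · rw [globalMap, globalMap, hf i (not_le.mp hi)]
      exact (globalMap_const_comp_add f x d i).trans
        ((congrFun hxy _).trans (globalMap_const_comp_add f y d i).symm)
  funext i
  simpa using congrFun hshift (i - d)

theorem exists_orphan_word [Finite A] {f : (Fin (2 * r + 1) → A) → A}
    (hns : ¬Surjective (globalMap fun _ => f)) :
    ∃ (n : ℕ) (w : Fin n → A),
      ∀ x p, (fun o : Fin n => globalMap (fun _ => f) x (p + o)) ≠ w := by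
  obtain ⟨z, hz⟩ := not_forall.mp hns
  let _ : TopologicalSpace A := ⊥
  have : DiscreteTopology A := ⟨rfl⟩
  have hopen : IsOpen (Set.range (globalMap fun _ => f))ᶜ :=
    (isCompact_range (continuous_globalMap _)).isClosed.isOpen_compl
  -- a cylinder around `z` misses the range; a shift of any `x` would otherwise land in it
  obtain ⟨I, U, hIU, hsub⟩ := isOpen_pi_iff.mp hopen z hz
  obtain ⟨N, hN⟩ : ∃ N : ℕ, ∀ i ∈ I, -(N : ℤ) ≤ i ∧ i < N :=
    ⟨I.sup Int.natAbs + 1, fun i hi => by have := Finset.le_sup (f := Int.natAbs) hi; omega⟩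
  refine ⟨2 * N, fun o => z (o - N), fun x p hxp =>
    hsub (fun i hi => ?_) ⟨x ∘ (· + (p + N)), rfl⟩⟩
  obtain ⟨hlo, hhi⟩ := hN i hi
  have := congrFun hxp ⟨(i + N).toNat, by omega⟩
  simp only at this
  rw [globalMap_const_comp_add, show i + (p + N) = p + (i + N).toNat by omega, this,
    show ((i + N).toNat : ℤ) - N = i by omega]
  exact (hIU i hi).2

noncomputable def embed (a₀ : A) {L : ℕ} (u : Fin L → A) : ℤ → A :=
  extend (fun j : Fin L => (j : ℤ)) u fun _ => a₀

theorem embed_natCast (a₀ : A) {L : ℕ} (u : Fin L → A) (j : Fin L) : embed a₀ u j = u j :=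
  (Nat.cast_injective.comp Fin.val_injective).extend_apply _ _ j

theorem embed_congr_of_notMem_Ico (a₀ : A) {L : ℕ} (u v : Fin L → A) {i : ℤ}
    (hi : i ∉ Set.Ico 0 (L : ℤ)) : embed a₀ u i = embed a₀ v i := by
  have hout : ¬∃ j : Fin L, (j : ℤ) = i := by
    rintro ⟨j, rfl⟩
    exact hi ⟨by positivity, by exact_mod_cast j.isLt⟩
  rw [embed, embed, extend_apply' _ _ _ hout, extend_apply' _ _ _ hout]

theorem eq_of_globalMap_embed_eqOn {f : (Fin (2 * r + 1) → A) → A}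
    (hpre : Preinjective (globalMap fun _ => f)) (a₀ : A) {L : ℕ} {u v : Fin L → A}
    (huv : ∀ i : ℤ, -(r : ℤ) ≤ i → i < L + r →
      globalMap (fun _ => f) (embed a₀ u) i = globalMap (fun _ => f) (embed a₀ v) i) :
    u = v := by
  have hF : globalMap (fun _ => f) (embed a₀ u) = globalMap (fun _ => f) (embed a₀ v) :=
    funext fun i => by
      by_cases hi : -(r : ℤ) ≤ i ∧ i < L + r
      · exact huv i hi.1 hi.2
      · refine congrArg f (window_congr fun j _ _ => embed_congr_of_notMem_Ico a₀ u v ?_)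
        rw [Set.mem_Ico]
        omega
  have hfin : {i | embed a₀ u i ≠ embed a₀ v i}.Finite := (Set.finite_Ico (0 : ℤ) L).subset
    fun i hi => by_contra fun hout => hi (embed_congr_of_notMem_Ico a₀ u v hout)
  funext j
  simpa [embed_natCast] using congrFun (hpre hfin hF) j

theorem surjective_of_preinjective [Finite A] [Nonempty A] {f : (Fin (2 * r + 1) → A) → A}
    (hpre : Preinjective (globalMap fun _ => f)) : Surjective (globalMap fun _ => f) := by
  classical
  have := Fintype.ofFinite A
  by_contra hns
  obtain ⟨n, w, hw⟩ := exists_orphan_word hns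
  set F := globalMap fun _ => f
  obtain ⟨m, hm⟩ :=
    Nat.exists_mul_pow_lt_succ_pow (Fintype.card A ^ n - 1) (Fintype.card A ^ (2 * r))
  let a₀ : A := Classical.arbitrary A
  -- The image of a word of length `m * n` is determined by `m` consecutive blocks of length `n`,
  -- none of which is the orphan `w`, and a tail of length `2 * r`.
  let ψ (u : Fin (m * n) → A) :
      (Fin m → {g : Fin n → A // g ≠ w}) × (Fin (2 * r) → A) :=
    (fun j => ⟨fun o => F (embed a₀ u) (-r + n * j + o), hw _ _⟩,
      fun t => F (embed a₀ u) (-r + m * n + t))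
  have hψ : Injective ψ := fun u v huv =>
    eq_of_globalMap_embed_eqOn hpre a₀ fun i hi₁ hi₂ =>
      Int.eq_of_blocks
        (fun j o => congrFun (congrArg Subtype.val (congrFun (congrArg Prod.fst huv) j)) o)
        (fun t => congrFun (congrArg Prod.snd huv) t) hi₁ (by push_cast at hi₂ ⊢; omega)
  have hcard := Fintype.card_le_of_injective ψ hψ
  simp only [Fintype.card_prod, Fintype.card_pi, Finset.prod_const, Finset.card_univ,
    Fintype.card_fin, Fintype.card_subtype_compl, Fintype.card_subtype_eq] at hcard
  rw [Nat.sub_add_cancel (Nat.one_le_pow _ _ Fintype.card_pos), ← pow_mul, mul_comm n m,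
    mul_comm] at hm
  exact hm.not_ge hcard

end CellularAutomaton

open CellularAutomaton

/-- For a d-ν-CA `H` with default rule `f` (radius `r`, `h_i = f` for `|i| > k`):
if `H` is injective then the CA `F` with rule `f` is injective, and `H` is surjective. -/
theorem stmt_10 {A : Type} [Fintype A] [Nonempty A]
    (r k : ℕ)
    (h : ℤ → (Fin (2 * r + 1) → A) → A)
    (f : (Fin (2 * r + 1) → A) → A)
    (hf : ∀ i : ℤ, (k : ℤ) < |i| → h i = f)
    (H F : (ℤ → A) → (ℤ → A))
    (hH : ∀ (x : ℤ → A) (i : ℤ),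
      H x i = h i (fun j => x (i - (r : ℤ) + ((j : ℕ) : ℤ))))
    (hF : ∀ (x : ℤ → A) (i : ℤ),
      F x i = f (fun j => x (i - (r : ℤ) + ((j : ℕ) : ℤ)))) :
    Function.Injective H → Function.Injective F ∧ Function.Surjective H := by
  intro hinj
  obtain rfl : H = globalMap h := funext₂ hH
  obtain rfl : F = globalMap fun _ => f := funext₂ hF
  have hsurj := surjective_of_preinjective (preinjective_of_injective_of_eq_off hf hinj)
  refine injective_and_surjective_of_eq_off_finite (Set.finite_Icc (-k : ℤ) k)
    (fun x i hi => ?_) hinj hsurj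
  rw [Set.mem_Icc, ← abs_le, not_le] at hi
  rw [globalMap, globalMap, hf i hi]
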